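/- Let r ≥ 1 and s ≥ 3, and suppose x = (λ^1,…,λ^{s-1},ν) spans an extremal ray of EqLR_r^s and satisfies the equalities Σ_{q=1}^{s-1} λ^q_1 = ν_1 and, for every p ∈ {1,…,s-1} and every k with 2 ≤ k ≤ r, λ^p_k + Σ_{q≠p} λ^q_1 = ν_k. Then x = t·x_j for some j ∈ {1,…,s-1} and some real t > 0. Conversely, each x_j spans an extremal ray of EqLR_r^s and satisfies these equalities. -/

import Mathlib

open Matrix Polynomial BigOperators
open scoped ComplexOrder

noncomputable section

/-- A Hermitian `r × r` complex matrix `A` has eigenvalues `μ` (listed with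
multiplicity): `A` is Hermitian and its characteristic polynomial is
`∏ i, (X - μ i)`. -/
def HasEigenvalues {r : ℕ} (A : Matrix (Fin r) (Fin r) ℂ) (μ : Fin r → ℝ) : Prop :=
  A.IsHermitian ∧ A.charpoly = ∏ i, (X - Polynomial.C (μ i : ℂ))

/-- A tuple `(λ¹, …, λ^{s-1}, ν)` of real `r`-sequences. -/
abbrev Tup (r s : ℕ) := (Fin (s - 1) → Fin r → ℝ) × (Fin r → ℝ)

/-- The Hermitian eigencone `C_r^s`: tuples of nonincreasing sequences that are the
eigenvalues of Hermitian matrices `A₁, …, A_{s-1}, C` with `A₁ + ⋯ + A_{s-1} = C`. -/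
def memC (r s : ℕ) (x : Tup r s) : Prop :=
  (∀ j, Antitone (x.1 j)) ∧ Antitone x.2 ∧
  ∃ (A : Fin (s - 1) → Matrix (Fin r) (Fin r) ℂ) (B : Matrix (Fin r) (Fin r) ℂ),
    (∀ j, HasEigenvalues (A j) (x.1 j)) ∧ HasEigenvalues B x.2 ∧ (∑ j, A j) = B

/-- The majorized eigencone `EqC_r^s`: as above but `A₁ + ⋯ + A_{s-1} - C` is
positive semidefinite. -/
def memEqC (r s : ℕ) (x : Tup r s) : Prop :=
  (∀ j, Antitone (x.1 j)) ∧ Antitone x.2 ∧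
  ∃ (A : Fin (s - 1) → Matrix (Fin r) (Fin r) ℂ) (B : Matrix (Fin r) (Fin r) ℂ),
    (∀ j, HasEigenvalues (A j) (x.1 j)) ∧ HasEigenvalues B x.2 ∧ ((∑ j, A j) - B).PosSemidef

/-- The last (`r`-th) entry of an `r`-sequence. -/
def lastEntry {r : ℕ} (μ : Fin r → ℝ) : ℝ :=
  if h : 0 < r then μ ⟨r - 1, by omega⟩ else 0

/-- `LR_r^s = {x ∈ C_r^s : λ^j_r ≥ 0 for all j}`. -/
def memLR (r s : ℕ) (x : Tup r s) : Prop :=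
  memC r s x ∧ ∀ j, 0 ≤ lastEntry (x.1 j)

/-- `C_{SL_r}^s = {x ∈ C_r^s : λ^j_r = 0 for all j}`. -/
def memCSL (r s : ℕ) (x : Tup r s) : Prop :=
  memC r s x ∧ ∀ j, lastEntry (x.1 j) = 0

/-- `EqLR_r^s = {x ∈ EqC_r^s : λ^j_r ≥ 0 and λ^j_i ≤ ν_i for all i, j}`. -/
def memEqLR (r s : ℕ) (x : Tup r s) : Prop :=
  memEqC r s x ∧ (∀ j, 0 ≤ lastEntry (x.1 j)) ∧ ∀ j i, x.1 j i ≤ x.2 i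

/-- `ω_k ∈ ℝ^r`: first `k` entries equal `1`, the rest `0`. -/
def omegaVec (r k : ℕ) : Fin r → ℝ := fun i => if (i : ℕ) < k then 1 else 0

/-- `x_j ∈ (ℝ^r)^s`: `ω_r` in the `j`-th and last positions, `0` elsewhere. -/
def xvec (r s : ℕ) (j : Fin (s - 1)) : Tup r s :=
  (fun k => if k = j then omegaVec r r else 0, omegaVec r r)

/-- A nonzero `x` in a cone `K` spans an extremal ray of `K` if whenever
`x = y + z` with `y, z ∈ K`, both `y` and `z` are nonnegative multiples of `x`. -/
def IsExtremalRay {M : Type*} [AddCommMonoid M] [Module ℝ M] (K : Set M) (x : M) : Prop :=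
  x ≠ 0 ∧ x ∈ K ∧ ∀ y z, y ∈ K → z ∈ K → x = y + z →
    (∃ c : ℝ, 0 ≤ c ∧ y = c • x) ∧ (∃ c : ℝ, 0 ≤ c ∧ z = c • x)

/-!
The Horn equalities say `λᵖᵢ = λᵖ₁ + (νᵢ - ν₁)`. Substituted into the trace inequality
`tr (∑ Aₚ - C) ≥ 0`, they give `(s - 2) ∑ᵢ (νᵢ - ν₁) ≥ 0`; as `ν` is nonincreasing, `ν` is constant,
hence so is every `λᵖ`, i.e. `x = ∑ₚ cₚ xₚ` with `c ≥ 0`, and extremality leaves one nonzero `cₚ`.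
Conversely `x_j` is realised by scalar matrices. In a splitting `x_j = y + z`, nonnegativity kills
the components `p ≠ j` of `y`, the trace inequality together with `λʲ ≤ ν` forces `λʲ(y) = ν(y)`,
and `ν(y)`, `ν(z)` are nonincreasing with constant sum, hence constant.
-/

theorem HasEigenvalues.trace_eq {r : ℕ} {A : Matrix (Fin r) (Fin r) ℂ} {μ : Fin r → ℝ}
    (h : HasEigenvalues A μ) : A.trace = ∑ i, (μ i : ℂ) := by
  rw [trace_eq_sum_roots_charpoly, h.2,
    roots_prod _ _ (monic_prod_of_monic _ _ fun i _ => monic_X_sub_C _).ne_zero]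
  simp [Finset.sum_eq_multiset_sum]

theorem hasEigenvalues_diagonal {r : ℕ} (d : Fin r → ℝ) :
    HasEigenvalues (diagonal fun i => (d i : ℂ)) d :=
  ⟨isHermitian_diagonal_of_self_adjoint _ (funext fun i => by simp), charpoly_diagonal _⟩

section

variable {r s : ℕ}

theorem memEqC.sum_snd_le {x : Tup r s} (hx : memEqC r s x) :
    ∑ i, x.2 i ≤ ∑ p, ∑ i, x.1 p i := by
  obtain ⟨-, -, A, B, hA, hB, hpsd⟩ := hx
  have h := hpsd.trace_nonneg
  rw [trace_sub, trace_sum, hB.trace_eq, Finset.sum_congr rfl fun p _ => (hA p).trace_eq,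
    sub_nonneg] at h
  exact_mod_cast h

theorem memEqLR.fst_nonneg {x : Tup r s} (hx : memEqLR r s x) (p : Fin (s - 1)) (i : Fin r) :
    0 ≤ x.1 p i := by
  have h := hx.2.1 p
  rw [lastEntry, dif_pos i.pos] at h
  exact h.trans (hx.1.1 p (Fin.le_def.2 (Nat.le_sub_one_of_lt i.isLt)))

/-- `xcomb r s c = ∑ p, c p • xvec r s p`. -/
def xcomb (r s : ℕ) : (Fin (s - 1) → ℝ) →ₗ[ℝ] Tup r s where
  toFun c := (fun p _ => c p, fun _ => ∑ p, c p)
  map_add' c d := by ext <;> simp [Finset.sum_add_distrib]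
  map_smul' t c := by ext <;> simp [Finset.mul_sum]

@[simp]
theorem xcomb_fst (c : Fin (s - 1) → ℝ) (p : Fin (s - 1)) (i : Fin r) :
    (xcomb r s c).1 p i = c p := rfl

@[simp]
theorem xcomb_snd (c : Fin (s - 1) → ℝ) (i : Fin r) : (xcomb r s c).2 i = ∑ p, c p := rfl

theorem xcomb_injective (hr : 0 < r) : Function.Injective (xcomb r s) :=
  fun _ _ h => funext fun p => congrFun (congrFun (congrArg Prod.fst h) p) ⟨0, hr⟩

theorem xvec_eq_xcomb (j : Fin (s - 1)) : xvec r s j = xcomb r s (Pi.single j 1) := by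
  refine Prod.ext (funext₂ fun p i => ?_) (funext fun i => ?_)
  · by_cases hp : p = j <;> simp [xvec, omegaVec, hp]
  · simp [xvec, omegaVec]

theorem xcomb_single (j : Fin (s - 1)) (t : ℝ) : xcomb r s (Pi.single j t) = t • xvec r s j := by
  rw [xvec_eq_xcomb, ← map_smul, ← Pi.single_smul', smul_eq_mul, mul_one]

theorem memEqLR_xcomb_iff (hr : 0 < r) {c : Fin (s - 1) → ℝ} :
    memEqLR r s (xcomb r s c) ↔ 0 ≤ c := by
  refine ⟨fun h p => h.fst_nonneg p ⟨0, hr⟩, fun hc => ⟨⟨fun _ => antitone_const, antitone_const,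
    fun p => diagonal fun _ => (c p : ℂ), diagonal fun _ => ((∑ p, c p : ℝ) : ℂ),
    fun p => hasEigenvalues_diagonal _, hasEigenvalues_diagonal _, ?_⟩, fun p => ?_,
    fun p i => Finset.single_le_sum (fun q _ => hc q) (Finset.mem_univ p)⟩⟩
  · convert PosSemidef.zero
    ext i k
    by_cases h : i = k <;> simp [Matrix.sum_apply, h]
  · simpa [lastEntry, hr] using hc p

theorem fst_eq_add_of_horn (hr : 0 < r) {x : Tup r s}
    (h1 : ∑ q, x.1 q ⟨0, hr⟩ = x.2 ⟨0, hr⟩)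
    (h2 : ∀ p : Fin (s - 1), ∀ k : ℕ, ∀ hk2 : 2 ≤ k, ∀ hkr : k ≤ r,
      x.1 p ⟨k - 1, Nat.sub_one_lt_of_le (zero_lt_two.trans_le hk2) hkr⟩
        + ∑ q ∈ Finset.univ.erase p, x.1 q ⟨0, hr⟩
        = x.2 ⟨k - 1, Nat.sub_one_lt_of_le (zero_lt_two.trans_le hk2) hkr⟩)
    (p : Fin (s - 1)) (i : Fin r) :
    x.1 p i = x.1 p ⟨0, hr⟩ + (x.2 i - x.2 ⟨0, hr⟩) := by
  obtain ⟨_ | i, hi⟩ := i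
  · ring
  · have := Finset.add_sum_erase _ (fun q => x.1 q ⟨0, hr⟩) (Finset.mem_univ p)
    have h := h2 p (i + 1 + 1) (by omega) hi
    simp only [Nat.add_sub_cancel] at h
    linarith

theorem snd_eq_of_fst_eq_add (hr : 0 < r) (hs : 3 ≤ s) {x : Tup r s} (hx : memEqC r s x)
    (h1 : ∑ q, x.1 q ⟨0, hr⟩ = x.2 ⟨0, hr⟩)
    (hshift : ∀ p i, x.1 p i = x.1 p ⟨0, hr⟩ + (x.2 i - x.2 ⟨0, hr⟩)) (i : Fin r) :
    x.2 i = x.2 ⟨0, hr⟩ := by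
  have hd (i : Fin r) : x.2 i - x.2 ⟨0, hr⟩ ≤ 0 :=
    sub_nonpos.2 (hx.2.1 (Fin.le_def.2 i.val.zero_le))
  set D := ∑ i, (x.2 i - x.2 ⟨0, hr⟩)
  have hsnd : ∑ i, x.2 i = r * x.2 ⟨0, hr⟩ + D := by simp [D, Finset.sum_sub_distrib]
  have hfst : ∑ p, ∑ i, x.1 p i = r * x.2 ⟨0, hr⟩ + (s - 1 : ℕ) * D := by
    rw [Finset.sum_congr rfl fun p _ => Finset.sum_congr rfl fun i _ => hshift p i]
    simp only [Finset.sum_add_distrib, Finset.sum_const, Finset.card_univ, Fintype.card_fin,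
      nsmul_eq_mul, ← Finset.mul_sum, h1]
    rfl
  have hs' : (2 : ℝ) ≤ (s - 1 : ℕ) := by exact_mod_cast (by omega : 2 ≤ s - 1)
  have hD0 : D ≤ 0 := Finset.sum_nonpos fun i _ => hd i
  have hD : D = 0 := by nlinarith [hx.sum_snd_le]
  linarith [(Finset.sum_eq_zero_iff_of_nonpos fun i _ => hd i).1 hD i (Finset.mem_univ i)]

theorem exists_eq_xcomb_of_horn (hr : 0 < r) (hs : 3 ≤ s) {x : Tup r s} (hx : memEqC r s x)
    (h1 : ∑ q, x.1 q ⟨0, hr⟩ = x.2 ⟨0, hr⟩)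
    (h2 : ∀ p : Fin (s - 1), ∀ k : ℕ, ∀ hk2 : 2 ≤ k, ∀ hkr : k ≤ r,
      x.1 p ⟨k - 1, Nat.sub_one_lt_of_le (zero_lt_two.trans_le hk2) hkr⟩
        + ∑ q ∈ Finset.univ.erase p, x.1 q ⟨0, hr⟩
        = x.2 ⟨k - 1, Nat.sub_one_lt_of_le (zero_lt_two.trans_le hk2) hkr⟩) :
    ∃ c, x = xcomb r s c := by
  have hshift := fst_eq_add_of_horn hr h1 h2
  have hν := snd_eq_of_fst_eq_add hr hs hx h1 hshift
  refine ⟨fun p => x.1 p ⟨0, hr⟩, Prod.ext (funext₂ fun p i => ?_) (funext fun i => ?_)⟩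
  · simp [hshift p i, hν i]
  · simp [hν i, h1]

theorem exists_eq_smul_xvec_of_isExtremalRay_xcomb (hr : 0 < r) {c : Fin (s - 1) → ℝ}
    (h : IsExtremalRay {y : Tup r s | memEqLR r s y} (xcomb r s c)) :
    ∃ j, ∃ t : ℝ, 0 < t ∧ xcomb r s c = t • xvec r s j := by
  obtain ⟨hne, hmem, hsplit⟩ := h
  have hc : 0 ≤ c := (memEqLR_xcomb_iff hr).1 hmem
  obtain ⟨j, hj⟩ : ∃ j, c j ≠ 0 := Function.ne_iff.1 fun h0 => hne (by rw [h0]; exact map_zero _)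
  set c₁ : Fin (s - 1) → ℝ := Pi.single j (c j)
  have hc₁ : 0 ≤ c₁ := Pi.single_nonneg.2 (hc j)
  have hc₂ : 0 ≤ c - c₁ := fun p => by
    by_cases hp : p = j
    · simp [c₁, hp]
    · simpa [c₁, hp] using hc p
  obtain ⟨⟨a, -, ha⟩, -⟩ := hsplit _ _ ((memEqLR_xcomb_iff hr).2 hc₁)
    ((memEqLR_xcomb_iff hr).2 hc₂) (by rw [← map_add, add_sub_cancel])
  rw [← map_smul] at ha
  have hca : c₁ = a • c := xcomb_injective hr ha
  have ha1 : a = 1 := by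
    have := congrFun hca j
    simp only [c₁, Pi.single_eq_same, Pi.smul_apply, smul_eq_mul] at this
    exact (mul_eq_right₀ hj).1 this.symm
  have hc₁c : c₁ = c := by rw [hca, ha1, one_smul]
  exact ⟨j, c j, (hc j).lt_of_ne' hj, by rw [← xcomb_single]; exact congrArg _ hc₁c.symm⟩

theorem exists_eq_smul_xvec_of_add_eq (hr : 0 < r) {j : Fin (s - 1)} {y z : Tup r s}
    (hy : memEqLR r s y) (hz : memEqLR r s z) (h : xvec r s j = y + z) :
    ∃ t : ℝ, 0 ≤ t ∧ y = t • xvec r s j := by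
  rw [xvec_eq_xcomb] at h
  have hfst (p i) : y.1 p i + z.1 p i = (Pi.single j 1 : Fin (s - 1) → ℝ) p :=
    (congrFun (congrFun (congrArg Prod.fst h) p) i).symm
  have hsnd (i) : y.2 i + z.2 i = 1 := by simpa using (congrFun (congrArg Prod.snd h) i).symm
  have hoff (p) (hp : p ≠ j) (i) : y.1 p i = 0 := by
    have := hfst p i
    rw [Pi.single_eq_of_ne hp] at this
    linarith [hy.fst_nonneg p i, hz.fst_nonneg p i]
  have hdiag : ∀ i, y.1 j i = y.2 i := by
    refine fun i => (Finset.sum_eq_sum_iff_of_le fun i _ => hy.2.2 j i).1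
      (le_antisymm (Finset.sum_le_sum fun i _ => hy.2.2 j i) ?_) i (Finset.mem_univ i)
    calc ∑ i, y.2 i ≤ ∑ p, ∑ i, y.1 p i := hy.1.sum_snd_le
      _ = ∑ i, y.1 j i :=
        Finset.sum_eq_single j (fun p _ hp => Finset.sum_eq_zero fun i _ => hoff p hp i) (by simp)
  have hconst (i : Fin r) : y.2 i = y.2 ⟨0, hr⟩ := by
    have h0i : (⟨0, hr⟩ : Fin r) ≤ i := Fin.le_def.2 i.val.zero_le
    linarith [hy.1.2.1 h0i, hz.1.2.1 h0i, hsnd i, hsnd ⟨0, hr⟩]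
  refine ⟨y.2 ⟨0, hr⟩, hdiag ⟨0, hr⟩ ▸ hy.fst_nonneg j ⟨0, hr⟩, ?_⟩
  rw [← xcomb_single]
  refine Prod.ext (funext₂ fun p i => ?_) (funext fun i => ?_)
  · by_cases hp : p = j
    · subst hp; simp [hdiag, hconst i]
    · simp [hoff p hp, hp]
  · simp [hconst i]

theorem isExtremalRay_xvec (hr : 0 < r) (j : Fin (s - 1)) :
    IsExtremalRay {y : Tup r s | memEqLR r s y} (xvec r s j) := by
  refine ⟨fun h0 => ?_, ?_, fun y z hy hz h => ⟨exists_eq_smul_xvec_of_add_eq hr hy hz h,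
    exists_eq_smul_xvec_of_add_eq hr hz hy (h.trans (add_comm y z))⟩⟩
  · simpa [xvec, omegaVec, hr] using congrFun (congrArg Prod.snd h0) ⟨0, hr⟩
  · rw [xvec_eq_xcomb]
    exact (memEqLR_xcomb_iff hr).2 (Pi.single_nonneg.2 zero_le_one)

end

/-- an extremal ray of `EqLR_r^s` satisfying the displayed Horn
equalities is a positive multiple of some `x_j`; conversely each `x_j` spans an
extremal ray and satisfies those equalities. -/
theorem stmt10 (r s : ℕ) (hr : 1 ≤ r) (hs : 3 ≤ s) :
    (∀ x : Tup r s,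
      IsExtremalRay {y : Tup r s | memEqLR r s y} x →
      (∑ q, x.1 q ⟨0, by omega⟩ = x.2 ⟨0, by omega⟩) →
      (∀ p : Fin (s - 1), ∀ k : ℕ, ∀ _hk2 : 2 ≤ k, ∀ _hkr : k ≤ r,
        x.1 p ⟨k - 1, by omega⟩ + ∑ q ∈ Finset.univ.erase p, x.1 q ⟨0, by omega⟩
          = x.2 ⟨k - 1, by omega⟩) →
      ∃ (j : Fin (s - 1)) (t : ℝ), 0 < t ∧ x = t • xvec r s j) ∧
    (∀ j : Fin (s - 1),
      IsExtremalRay {y : Tup r s | memEqLR r s y} (xvec r s j) ∧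
      (∑ q, (xvec r s j).1 q ⟨0, by omega⟩ = (xvec r s j).2 ⟨0, by omega⟩) ∧
      (∀ p : Fin (s - 1), ∀ k : ℕ, ∀ _hk2 : 2 ≤ k, ∀ _hkr : k ≤ r,
        (xvec r s j).1 p ⟨k - 1, by omega⟩
          + ∑ q ∈ Finset.univ.erase p, (xvec r s j).1 q ⟨0, by omega⟩
          = (xvec r s j).2 ⟨k - 1, by omega⟩)) := by
  refine ⟨fun x hx h1 h2 => ?_, fun j => ⟨isExtremalRay_xvec hr j, ?_, fun p k _ _ => ?_⟩⟩
  · obtain ⟨c, rfl⟩ := exists_eq_xcomb_of_horn hr hs hx.2.1.1 h1 h2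
    exact exists_eq_smul_xvec_of_isExtremalRay_xcomb hr hx
  · simp [xvec_eq_xcomb]
  · simp only [xvec_eq_xcomb, xcomb_fst, xcomb_snd]
    exact Finset.add_sum_erase _ _ (Finset.mem_univ p)
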